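/- arXiv:2309.02613 — 2 statements merged into one kernel-verified Lean document; each statement's English description precedes it below -/
import Mathlib

section
/- The Ladder mechanism overfunds by at most 1/4: for every preference profile P on n voters and m projects and every project j, A(P)_j − P̄_j ≤ 1/4, where A is the Ladder mechanism. Moreover, if n is odd, A(P)_j − P̄_j ≤ (1/4)(1 − 1/n²). -/
open Finset

/-- With the convention used here, for a multiset of `2n+1` real numbers,
`med n s` is the `(n+1)`-st smallest element, i.e. the median. -/
noncomputable def med (n : ℕ) (s : Multiset ℝ) : ℝ :=
  (s.sort (· ≤ ·)).getD n 0

/-- The median of the `n+1` phantom values `phantoms 0, …, phantoms n`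
together with the `n` votes. -/
noncomputable def projMed (n : ℕ) (phantoms : ℕ → ℝ) (votes : Fin n → ℝ) : ℝ :=
  med n ((Multiset.range (n + 1)).map phantoms + Finset.univ.val.map votes)

/-- `P` is a preference profile: every entry lies in `[0,1]` and every row
lies in the standard simplex. -/
def IsProfile {n m : ℕ} (P : Fin n → Fin m → ℝ) : Prop :=
  (∀ i j, P i j ∈ Set.Icc (0 : ℝ) 1) ∧ ∀ i, ∑ j, P i j = 1

/-- The mean funding of project `j` in profile `P`. -/
noncomputable def mean {n m : ℕ} (P : Fin n → Fin m → ℝ) (j : Fin m) : ℝ :=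
  (∑ i, P i j) / (n : ℝ)

/-- `t` is a normalization point for the phantoms `f 0, …, f n` and profile `P`. -/
def IsNormPoint {n m : ℕ} (f : ℕ → ℝ → ℝ) (P : Fin n → Fin m → ℝ) (t : ℝ) : Prop :=
  t ∈ Set.Icc (0 : ℝ) 1 ∧
    ∑ j, projMed n (fun k => f k t) (fun i => P i j) = 1

/-- The output of the moving phantom mechanism with phantoms `f` on profile `P`,
evaluated at (normalization) point `t`, for project `j`. -/
noncomputable def output {n m : ℕ} (f : ℕ → ℝ → ℝ) (P : Fin n → Fin m → ℝ)
    (t : ℝ) (j : Fin m) : ℝ :=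
  projMed n (fun k => f k t) (fun i => P i j)

/-- `f 0, …, f n` is a phantom system for `n` voters. -/
structure IsPhantomSystem (n : ℕ) (f : ℕ → ℝ → ℝ) : Prop where
  continuousOn : ∀ k ≤ n, ContinuousOn (f k) (Set.Icc 0 1)
  monotoneOn : ∀ k ≤ n, MonotoneOn (f k) (Set.Icc 0 1)
  mem_Icc : ∀ k ≤ n, ∀ t ∈ Set.Icc (0 : ℝ) 1, f k t ∈ Set.Icc (0 : ℝ) 1
  map_zero : ∀ k ≤ n, f k 0 = 0
  map_one : ∀ k ≤ n, f k 1 = 1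
  ordered : ∀ k l, k ≤ l → l ≤ n → ∀ t ∈ Set.Icc (0 : ℝ) 1, f l t ≤ f k t

/-- The phantom system of the Ladder mechanism for `n` voters. -/
noncomputable def ladder (n : ℕ) (k : ℕ) (t : ℝ) : ℝ :=
  max (t - (k : ℝ) / (n : ℝ)) 0

/-- The phantom system of the Independent Markets mechanism for `n` voters. -/
noncomputable def indMarkets (n : ℕ) (k : ℕ) (t : ℝ) : ℝ :=
  t * ((n : ℝ) - (k : ℝ)) / (n : ℝ)

/-- The moving phantom mechanism given by the family `F` of phantom systems
overfunds by at most `α`. -/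
def OverfundsByAtMost (F : ℕ → ℕ → ℝ → ℝ) (α : ℕ → ℕ → ℝ) : Prop :=
  ∀ n m : ℕ, 0 < n → 0 < m → ∀ P : Fin n → Fin m → ℝ, IsProfile P →
    ∀ t, IsNormPoint (F n) P t → ∀ j, output (F n) P t j - mean P j ≤ α n m

/-- The moving phantom mechanism given by the family `F` of phantom systems
underfunds by at most `α`. -/
def UnderfundsByAtMost (F : ℕ → ℕ → ℝ → ℝ) (α : ℕ → ℕ → ℝ) : Prop :=
  ∀ n m : ℕ, 0 < n → 0 < m → ∀ P : Fin n → Fin m → ℝ, IsProfile P →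
    ∀ t, IsNormPoint (F n) P t → ∀ j, mean P j - output (F n) P t j ≤ α n m

/-- The moving phantom mechanism given by the family `F` of phantom systems
is proportional: on profiles of single-minded voters it outputs the mean. -/
def Proportional (F : ℕ → ℕ → ℝ → ℝ) : Prop :=
  ∀ n m : ℕ, 0 < n → 0 < m → ∀ P : Fin n → Fin m → ℝ, IsProfile P →
    (∀ i j, P i j = 0 ∨ P i j = 1) →
    ∀ t, IsNormPoint (F n) P t → ∀ j, output (F n) P t j = mean P j

/-- The moving phantom mechanism given by the family `F` of phantom systems
is zero-unanimous. -/
def ZeroUnanimous (F : ℕ → ℕ → ℝ → ℝ) : Prop :=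
  ∀ n m : ℕ, 0 < n → 0 < m → ∀ P : Fin n → Fin m → ℝ, IsProfile P →
    ∀ j : Fin m, (∀ i, P i j = 0) →
      ∀ t, IsNormPoint (F n) P t → output (F n) P t j = 0


lemma med_mem' {n : ℕ} {s : Multiset ℝ} (h : n < Multiset.card s) : med n s ∈ s := by
  have hlen : (s.sort (· ≤ ·)).length = Multiset.card s := Multiset.length_sort _
  have h2 : med n s = (s.sort (· ≤ ·)).get ⟨n, by omega⟩ := by
    rw [med, List.getD_eq_getElem _ _ (by omega)]
    simp
  rw [h2, ← Multiset.mem_sort (· ≤ ·)]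
  apply List.get_mem

open Classical in
lemma countP_med_le' {n : ℕ} {s : Multiset ℝ} (h : Multiset.card s = 2*n+1) :
    n + 1 ≤ Multiset.countP (fun x => med n s ≤ x) s := by
  classical
  obtain ⟨a, ha⟩ : ∃ a, a = med n s := ⟨_, rfl⟩
  rw [← ha]
  have hlen : (s.sort (· ≤ ·)).length = 2*n+1 := by rw [Multiset.length_sort, h]
  have hsorted : (s.sort (· ≤ ·)).Pairwise (· ≤ ·) := Multiset.pairwise_sort s _
  have hmed : a = (s.sort (· ≤ ·)).get ⟨n, by omega⟩ := by
    rw [ha, med, List.getD_eq_getElem _ _ (by omega)]; simp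
  set l := s.sort (· ≤ ·) with hl
  have hcount : Multiset.countP (fun x => a ≤ x) s
      = l.countP (fun x => decide (a ≤ x)) := by
    conv_lhs => rw [← Multiset.sort_eq s (· ≤ ·)]
    rfl
  rw [hcount]
  have hsplit : l.countP (fun x => decide (a ≤ x))
      ≥ (l.drop n).countP (fun x => decide (a ≤ x)) := by
    conv_lhs => rw [← List.take_append_drop n l, List.countP_append]
    omega
  have hall : ∀ x ∈ l.drop n, a ≤ x := by
    intro x hx
    obtain ⟨i, hi, rfl⟩ := List.mem_iff_getElem.mp hx
    rw [List.getElem_drop]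
    rw [hmed]
    have := hsorted.rel_get_of_le (a := ⟨n, by omega⟩)
      (b := ⟨n + i, by simp [List.length_drop] at hi; omega⟩) (by simp)
    simpa using this
  have hcl : (l.drop n).countP (fun x => decide (a ≤ x)) = (l.drop n).length := by
    apply List.countP_eq_length.mpr
    intro x hx; simpa using hall x hx
  rw [List.length_drop, hlen] at hcl
  omega

lemma real_aux1 (nr a cr : ℝ) (hn : 0 < nr) (ha : 0 < a) (h1 : nr*a ≤ cr)
    (h2 : cr ≤ nr) : a*(nr - cr) ≤ 1/4 * nr := by
  nlinarith [sq_nonneg (nr - 2*cr), mul_nonneg (by linarith : (0:ℝ) ≤ cr - nr*a) (by linarith : (0:ℝ) ≤ nr - cr)]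

lemma real_aux2 (nr a cr : ℝ) (hn : 0 < nr) (ha : 0 < a) (h1 : nr*a ≤ cr)
    (h2 : cr ≤ nr) (h3 : 4*cr*(nr-cr) ≤ nr^2 - 1) :
    a*(nr - cr) * (4*nr^2) ≤ (nr^2-1)*nr := by
  nlinarith [mul_nonneg (mul_nonneg (by linarith : (0:ℝ) ≤ cr - nr*a) (by linarith : (0:ℝ) ≤ nr - cr)) (le_of_lt hn)]

lemma odd_int_aux (n c : ℕ) (hodd : Odd n) : 4*(c:ℤ)*((n:ℤ)-c) ≤ (n:ℤ)^2 - 1 := by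
  obtain ⟨k, hk⟩ := hodd
  have hd0 : ((n:ℤ) - 2*c) ≠ 0 := by omega
  have h1 : 1 ≤ ((n:ℤ) - 2*c)^2 := by
    rcases lt_or_gt_of_ne hd0 with h | h <;> nlinarith
  nlinarith

/-- The Ladder mechanism overfunds by at most `1/4`, and by at
most `(1/4)(1 - 1/n²)` when `n` is odd. -/
theorem ladder_overfunds_by_at_most
    (n m : ℕ) (hn : 0 < n) (hm : 0 < m)
    (P : Fin n → Fin m → ℝ) (hP : IsProfile P)
    (t : ℝ) (ht : IsNormPoint (ladder n) P t) (j : Fin m) :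
    output (ladder n) P t j - mean P j ≤ 1 / 4 ∧
    (Odd n → output (ladder n) P t j - mean P j ≤ 1 / 4 * (1 - 1 / (n : ℝ) ^ 2)) := by
  classical
  have hn' : (0:ℝ) < n := Nat.cast_pos.mpr hn
  set v : Fin n → ℝ := fun i => P i j with hv
  set F : ℕ → ℝ := fun k => ladder n k t with hF
  set s : Multiset ℝ := (Multiset.range (n + 1)).map F + Finset.univ.val.map v with hs
  have hcard : Multiset.card s = 2*n+1 := by
    simp [hs]; ring
  obtain ⟨a, ha⟩ : ∃ a, med n s = a := ⟨_, rfl⟩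
  have hout : output (ladder n) P t j = a := by rw [← ha]; rfl
  -- basic bounds on a
  have hmem : a ∈ s := ha ▸ med_mem' (by omega)
  have ht0 : (0:ℝ) ≤ t := ht.1.1
  have ht1 : t ≤ 1 := ht.1.2
  have ha0 : 0 ≤ a := by
    rw [hs, Multiset.mem_add] at hmem
    rcases hmem with hm | hm
    · obtain ⟨k, _, hk⟩ := Multiset.mem_map.mp hm
      rw [← hk]; exact le_max_right _ _
    · obtain ⟨i, _, hi⟩ := Multiset.mem_map.mp hm
      rw [← hi]; exact (hP.1 i j).1
  have ha1 : a ≤ 1 := by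
    rw [hs, Multiset.mem_add] at hmem
    rcases hmem with hm | hm
    · obtain ⟨k, _, hk⟩ := Multiset.mem_map.mp hm
      have hk0 : (0:ℝ) ≤ (k:ℝ)/(n:ℝ) := by positivity
      rw [← hk]
      simp only [hF, ladder]
      apply max_le (by linarith) (by norm_num)
    · obtain ⟨i, _, hi⟩ := Multiset.mem_map.mp hm
      rw [← hi]; exact (hP.1 i j).2
  have hSnn : (0:ℝ) ≤ ∑ i, P i j :=
    Finset.sum_nonneg fun i _ => (hP.1 i j).1
  have hmean0 : (0:ℝ) ≤ mean P j := by
    rw [mean]; positivity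
  rcases eq_or_lt_of_le ha0 with haz | hapos
  · -- a = 0
    have hgoal : output (ladder n) P t j - mean P j ≤ 0 := by
      rw [hout, ← haz]; linarith
    constructor
    · linarith
    · intro _
      have h1 : 1/(n:ℝ)^2 ≤ 1 := by
        apply div_le_one_of_le₀
        · have : (1:ℝ) ≤ (n:ℝ) := by exact_mod_cast hn
          nlinarith
        · positivity
      linarith
  · -- a > 0
    set c : ℕ := ⌈(n:ℝ)*a⌉₊ with hc
    have hcu : (n:ℝ)*a ≤ c := Nat.le_ceil _
    have hcl2 : (c:ℝ) < (n:ℝ)*a + 1 := Nat.ceil_lt_add_one (by positivity)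
    have hcn : c ≤ n := by
      rw [hc]
      apply Nat.ceil_le.mpr
      calc (n:ℝ)*a ≤ (n:ℝ)*1 := by nlinarith
        _ = (n:ℝ) := by ring
    have hcn' : (c:ℝ) ≤ (n:ℝ) := by exact_mod_cast hcn
    -- counting
    have hcnt := countP_med_le' hcard
    rw [ha, hs, Multiset.countP_add] at hcnt
    have hphantom : Multiset.countP (fun x => a ≤ x) ((Multiset.range (n+1)).map F)
        ≤ n + 1 - c := by
      rw [Multiset.countP_map]
      have hrange : Multiset.range (n+1) = (Finset.range (n+1)).val := rfl
      rw [hrange, ← Finset.filter_val, ← Finset.card_def]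
      calc ((Finset.range (n+1)).filter (fun k => a ≤ F k)).card
          ≤ (Finset.range (n+1-c)).card := by
            apply Finset.card_le_card
            intro k hk
            rw [Finset.mem_filter, Finset.mem_range] at hk
            rw [Finset.mem_range]
            obtain ⟨_, hak⟩ := hk
            have hak' : a ≤ t - (k:ℝ)/(n:ℝ) := by
              rcases le_max_iff.mp hak with h | h
              · exact h
              · linarith
            have hkr : (k:ℝ) ≤ (n:ℝ)*(t - a) := by
              have := (div_le_iff₀ hn').mp (by linarith : (k:ℝ)/(n:ℝ) ≤ t - a)
              linarith
            have hkr2 : (k:ℝ) < ((n - c : ℕ):ℝ) + 1 := by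
              rw [Nat.cast_sub hcn]
              nlinarith
            have : k < n - c + 1 := by exact_mod_cast hkr2
            omega
        _ = n + 1 - c := by rw [Finset.card_range]
    have hvotescnt : Multiset.countP (fun x => a ≤ x) (Finset.univ.val.map v)
        = (Finset.univ.filter (fun i => a ≤ v i)).card := by
      rw [Multiset.countP_map, ← Finset.filter_val, ← Finset.card_def]
    set V : Finset (Fin n) := Finset.univ.filter (fun i => a ≤ v i) with hV
    have hc1 : 1 ≤ c := by
      rw [hc]
      apply Nat.one_le_ceil_iff.mpr
      positivity
    have hVc : c ≤ V.card := by
      rw [hvotescnt] at hcnt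
      omega
    -- sum lower bound
    have hsum1 : (V.card : ℝ) * a ≤ ∑ i ∈ V, P i j := by
      have := Finset.card_nsmul_le_sum V (fun i => P i j) a
        (fun i hi => by
          rw [hV, Finset.mem_filter] at hi
          exact hi.2)
      simpa [nsmul_eq_mul] using this
    have hsum2 : ∑ i ∈ V, P i j ≤ ∑ i, P i j := by
      apply Finset.sum_le_sum_of_subset_of_nonneg (Finset.subset_univ V)
      intro i _ _; exact (hP.1 i j).1
    have hS : (c:ℝ) * a ≤ ∑ i, P i j := by
      have h1 : (c:ℝ) ≤ (V.card : ℝ) := by exact_mod_cast hVc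
      nlinarith
    have hmeanlb : (c:ℝ)*a/(n:ℝ) ≤ mean P j := by
      rw [mean]; gcongr
    have hmono : output (ladder n) P t j - mean P j ≤ a - (c:ℝ)*a/(n:ℝ) := by
      rw [hout]; linarith
    have hprod : 0 ≤ ((c:ℝ) - (n:ℝ)*a) * ((n:ℝ) - (c:ℝ)) :=
      mul_nonneg (by linarith) (by linarith)
    have e1 : a - (c:ℝ)*a/(n:ℝ) = (a*((n:ℝ)-(c:ℝ)))/(n:ℝ) := by
      field_simp
    constructor
    · have key : a - (c:ℝ)*a/(n:ℝ) ≤ 1/4 := by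
        rw [e1, div_le_iff₀ hn']
        exact real_aux1 _ _ _ hn' hapos hcu hcn' 
      linarith
    · intro hodd
      have hZr : 4*(c:ℝ)*((n:ℝ)-(c:ℝ)) ≤ (n:ℝ)^2 - 1 := by
        have := odd_int_aux n c hodd
        exact_mod_cast this
      have key : a - (c:ℝ)*a/(n:ℝ) ≤ ((n:ℝ)^2-1)/(4*(n:ℝ)^2) := by
        rw [e1, div_le_div_iff₀ hn' (by positivity)]
        exact real_aux2 _ _ _ hn' hapos hcu hcn' hZr
      have heq : ((n:ℝ)^2-1)/(4*(n:ℝ)^2) = 1/4 * (1 - 1/(n:ℝ)^2) := by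
        field_simp
      linarith
end

section
/- Let A be a zero-unanimous moving phantom mechanism. Then for every n ≥ 1 and every m ≥ 2 there exist a preference profile P on n voters and m projects and a project j such that A(P)_j − P̄_j ≥ 1/4 if n is even, and A(P)_j − P̄_j ≥ (1/4)(1 − 1/n) if n is odd. Consequently, there is no function α with α(n,m) < 1/4 for some even n (or α(n,m) < (1/4)(1 − 1/n) for some odd n) and some m ≥ 2 such that A overfunds by at most α. -/
open Finset

lemma med_le {n : ℕ} {s : Multiset ℝ} {c : ℝ}
    (h : n < Multiset.card (s.filter (fun x => x ≤ c))) : med n s ≤ c := by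
  classical
  set l := s.sort (· ≤ ·) with hl
  have hsort : l.Pairwise (· ≤ ·) := Multiset.pairwise_sort s _
  have hco : (l : Multiset ℝ) = s := Multiset.sort_eq s _
  have hfilt : Multiset.card (s.filter (fun x => x ≤ c)) =
      (l.filter (fun x => decide (x ≤ c))).length := by
    rw [← hco]
    simp [Multiset.filter_coe]
  rw [hfilt] at h
  by_contra hc
  push_neg at hc
  rw [show med n s = l.getD n 0 from rfl] at hc
  have hlen : n < l.length := lt_of_lt_of_le h (List.length_filter_le _ _)
  have hget : l.getD n 0 = l.get ⟨n, hlen⟩ := List.getD_eq_get l 0 ⟨n, hlen⟩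
  rw [hget] at hc
  -- all elements of drop n are > c
  have hdrop : (l.drop n).filter (fun x => decide (x ≤ c)) = [] := by
    apply List.filter_eq_nil_iff.mpr
    intro x hx
    simp only [decide_eq_true_eq]
    obtain ⟨i, hi⟩ := List.get_of_mem hx
    have : x = l.get ⟨n + i, by have := i.isLt; simp [List.length_drop] at this; omega⟩ := by
      rw [← hi]; simp [List.getElem_drop]
    rw [this]
    intro hle
    exact absurd (le_trans (hsort.rel_get_of_le (by simp : (⟨n, hlen⟩ : Fin l.length) ≤ _)) hle)
      (not_le.mpr hc)
  have : (l.filter (fun x => decide (x ≤ c))).length ≤ n := by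
    conv_lhs => rw [← List.take_append_drop n l]
    rw [List.filter_append, List.length_append, hdrop]
    simp only [List.length_nil, add_zero]
    exact le_trans (List.length_filter_le _ _) (by simp)
  omega

lemma le_med {n : ℕ} {s : Multiset ℝ} {c : ℝ} (hcard : Multiset.card s = 2 * n + 1)
    (h : n < Multiset.card (s.filter (fun x => c ≤ x))) : c ≤ med n s := by
  classical
  set l := s.sort (· ≤ ·) with hl
  have hsort : l.Pairwise (· ≤ ·) := Multiset.pairwise_sort s _
  have hco : (l : Multiset ℝ) = s := Multiset.sort_eq s _
  have hlenl : l.length = 2 * n + 1 := by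
    rw [← hcard, ← hco]; simp
  have hfilt : Multiset.card (s.filter (fun x => c ≤ x)) =
      (l.filter (fun x => decide (c ≤ x))).length := by
    rw [← hco]; simp [Multiset.filter_coe]
  rw [hfilt] at h
  by_contra hc
  push_neg at hc
  rw [show med n s = l.getD n 0 from rfl] at hc
  have hlen : n < l.length := by omega
  have hget : l.getD n 0 = l.get ⟨n, hlen⟩ := List.getD_eq_get l 0 ⟨n, hlen⟩
  rw [hget] at hc
  have htake : (l.take (n+1)).filter (fun x => decide (c ≤ x)) = [] := by
    apply List.filter_eq_nil_iff.mpr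
    intro x hx
    simp only [decide_eq_true_eq]
    obtain ⟨i, hi⟩ := List.get_of_mem hx
    have hilt : (i : ℕ) < n + 1 := by
      have := i.isLt; exact (by simpa [List.length_take, lt_min_iff] using this : _ ∧ _).1
    have hx2 : x = l.get ⟨i, by omega⟩ := by rw [← hi]; simp [List.getElem_take]
    rw [hx2]
    intro hle
    have : l.get ⟨(i:ℕ), by omega⟩ ≤ l.get ⟨n, hlen⟩ :=
      hsort.rel_get_of_le (by simp [Fin.le_def]; omega)
    exact absurd (le_trans hle this) (not_le.mpr hc)
  have : (l.filter (fun x => decide (c ≤ x))).length ≤ n := by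
    conv_lhs => rw [← List.take_append_drop (n+1) l]
    rw [List.filter_append, List.length_append, htake]
    simp only [List.length_nil, zero_add]
    refine le_trans (List.length_filter_le _ _) ?_
    simp [List.length_drop, hlenl]; omega
  omega


lemma count_split {n : ℕ} (f : ℕ → ℝ) (v : Fin n → ℝ) (p : ℝ → Prop) [DecidablePred p] :
    Multiset.card ((((Multiset.range (n + 1)).map f + Finset.univ.val.map v)).filter p)
      = ((Finset.range (n+1)).filter (fun k => p (f k))).card
        + (Finset.univ.filter (fun i => p (v i))).card := by
  rw [Multiset.filter_add, Multiset.card_add, Multiset.filter_map, Multiset.filter_map]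
  rw [Multiset.card_map, Multiset.card_map]
  rfl

lemma projMed_le {n : ℕ} (f : ℕ → ℝ) (v : Fin n → ℝ) (c : ℝ)
    (h : n + 1 ≤ ((Finset.range (n+1)).filter (fun k => f k ≤ c)).card
        + (Finset.univ.filter (fun i => v i ≤ c)).card) :
    projMed n f v ≤ c := by
  apply med_le
  rw [count_split]
  omega

lemma le_projMed {n : ℕ} (f : ℕ → ℝ) (v : Fin n → ℝ) (c : ℝ)
    (h : n + 1 ≤ ((Finset.range (n+1)).filter (fun k => c ≤ f k)).card
        + (Finset.univ.filter (fun i => c ≤ v i)).card) :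
    c ≤ projMed n f v := by
  apply le_med
  · simp [Multiset.card_add]; ring
  · rw [count_split]; omega

lemma card_fin_lt (n h : ℕ) (hh : h ≤ n) :
    (Finset.univ.filter fun i : Fin n => (i : ℕ) < h).card = h := by
  have : (Finset.univ.filter fun i : Fin n => (i : ℕ) < h)
      = (Finset.range h).attachFin (fun m hm => lt_of_lt_of_le (Finset.mem_range.mp hm) hh) := by
    ext i
    simp [Finset.mem_attachFin]
  rw [this, Finset.card_attachFin, Finset.card_range]

lemma card_fin_ge (n h : ℕ) (hh : h ≤ n) :
    (Finset.univ.filter fun i : Fin n => ¬ (i : ℕ) < h).card = n - h := by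
  have := Finset.card_filter_add_card_filter_not (s := (Finset.univ : Finset (Fin n)))
    (p := fun i : Fin n => (i : ℕ) < h)
  rw [card_fin_lt n h hh] at this
  simp only [Finset.card_univ, Fintype.card_fin] at this
  omega

lemma card_range_ge (N a : ℕ) (ha : a ≤ N) :
    ((Finset.range N).filter (fun k => a ≤ k)).card = N - a := by
  have : (Finset.range N).filter (fun k => a ≤ k) = Finset.Ico a N := by
    ext k; simp [Finset.mem_Ico]; omega
  rw [this, Nat.card_Ico]

lemma card_range_le' (N a : ℕ) (ha : a < N) :
    ((Finset.range N).filter (fun k => k ≤ a)).card = a + 1 := by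
  have : (Finset.range N).filter (fun k => k ≤ a) = Finset.range (a+1) := by
    ext k; simp; omega
  rw [this, Finset.card_range]

section medvals
variable {n : ℕ} {f : ℕ → ℝ}

lemma projMed_eq_phantom (ford : ∀ k l, k ≤ l → l ≤ n → f l ≤ f k)
    (hmem : ∀ k ≤ n, f k ∈ Set.Icc (0:ℝ) 1)
    (v : Fin n → ℝ) (k : ℕ) (hk : k ≤ n)
    (hv : ∀ i, v i = 0 ∨ v i = 1)
    (hcard : (Finset.univ.filter fun i => v i = 1).card = k) :
    projMed n f v = f (n - k) := by
  obtain ⟨h0, h1⟩ := hmem (n - k) (by omega)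
  have hcard0 : (Finset.univ.filter fun i => v i = 0).card = n - k := by
    have heq : (Finset.univ.filter fun i => v i = 0)
        = Finset.univ.filter (fun i => ¬ v i = 1) := by
      apply Finset.filter_congr
      intro i _
      rcases hv i with h | h <;> simp [h]
    have := Finset.card_filter_add_card_filter_not
      (s := (Finset.univ : Finset (Fin n))) (p := fun i => v i = 1)
    rw [hcard] at this
    simp only [Finset.card_univ, Fintype.card_fin] at this
    simp only [← heq] at this
    omega
  apply le_antisymm
  · apply projMed_le
    have e1 := card_range_ge (n+1) (n-k) (by omega)
    have c1 := Finset.card_le_card (show (Finset.range (n+1)).filter (fun j => n-k ≤ j)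
        ⊆ (Finset.range (n+1)).filter (fun j => f j ≤ f (n-k)) by
      intro j hj
      simp only [Finset.mem_filter, Finset.mem_range] at hj ⊢
      exact ⟨hj.1, ford (n-k) j hj.2 (by omega)⟩)
    have c2 := Finset.card_le_card (show (Finset.univ.filter fun i => v i = 0)
        ⊆ Finset.univ.filter (fun i => v i ≤ f (n-k)) by
      intro i hi
      simp only [Finset.mem_filter, Finset.mem_univ, true_and] at hi ⊢
      rw [hi]; exact h0)
    omega
  · apply le_projMed
    have e1 := card_range_le' (n+1) (n-k) (by omega)
    have c1 := Finset.card_le_card (show (Finset.range (n+1)).filter (fun j => j ≤ n-k)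
        ⊆ (Finset.range (n+1)).filter (fun j => f (n-k) ≤ f j) by
      intro j hj
      simp only [Finset.mem_filter, Finset.mem_range] at hj ⊢
      exact ⟨hj.1, ford j (n-k) hj.2 (by omega)⟩)
    have c2 := Finset.card_le_card (show (Finset.univ.filter fun i => v i = 1)
        ⊆ Finset.univ.filter (fun i => f (n-k) ≤ v i) by
      intro i hi
      simp only [Finset.mem_filter, Finset.mem_univ, true_and] at hi ⊢
      rw [hi]; exact h1)
    omega

lemma voters_filter_all {n : ℕ} (p : Fin n → Prop) [DecidablePred p]
    (hp : ∀ i, p i) : (Finset.univ.filter p).card = n := by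
  rw [Finset.filter_true_of_mem (fun i _ => hp i)]
  simp

lemma projMed_col1 (ford : ∀ k l, k ≤ l → l ≤ n → f l ≤ f k)
    (hmem : ∀ k ≤ n, f k ∈ Set.Icc (0:ℝ) 1)
    (v : Fin n → ℝ) (h : ℕ) (hh : h ≤ n)
    (hv1 : ∀ i : Fin n, (i:ℕ) < h → v i = 1)
    (hv2 : ∀ i : Fin n, ¬ (i:ℕ) < h → v i = 1/2) :
    projMed n f v = max (f (n-h)) (min (f 0) (1/2)) := by
  obtain ⟨hq0, hq1⟩ := hmem (n-h) (by omega)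
  obtain ⟨h00, h01⟩ := hmem 0 (by omega)
  have hq0f : f (n-h) ≤ f 0 := ford 0 (n-h) (by omega) (by omega)
  rcases le_total ((1:ℝ)/2) (f (n-h)) with hA | hB
  · -- value f (n-h)
    rw [max_eq_left (le_trans (min_le_right _ _) hA)]
    apply le_antisymm
    · apply projMed_le
      have e1 := card_range_ge (n+1) (n-h) (by omega)
      have c1 := Finset.card_le_card (show (Finset.range (n+1)).filter (fun j => n-h ≤ j)
          ⊆ (Finset.range (n+1)).filter (fun j => f j ≤ f (n-h)) by
        intro j hj
        simp only [Finset.mem_filter, Finset.mem_range] at hj ⊢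
        exact ⟨hj.1, ford (n-h) j hj.2 (by omega)⟩)
      have e2 := card_fin_ge n h hh
      have c2 := Finset.card_le_card (show (Finset.univ.filter fun i : Fin n => ¬ (i:ℕ) < h)
          ⊆ Finset.univ.filter (fun i => v i ≤ f (n-h)) by
        intro i hi
        simp only [Finset.mem_filter, Finset.mem_univ, true_and] at hi ⊢
        rw [hv2 i hi]; exact hA)
      omega
    · apply le_projMed
      have e1 := card_range_le' (n+1) (n-h) (by omega)
      have c1 := Finset.card_le_card (show (Finset.range (n+1)).filter (fun j => j ≤ n-h)
          ⊆ (Finset.range (n+1)).filter (fun j => f (n-h) ≤ f j) by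
        intro j hj
        simp only [Finset.mem_filter, Finset.mem_range] at hj ⊢
        exact ⟨hj.1, ford j (n-h) hj.2 (by omega)⟩)
      have e2 := card_fin_lt n h hh
      have c2 := Finset.card_le_card (show (Finset.univ.filter fun i : Fin n => (i:ℕ) < h)
          ⊆ Finset.univ.filter (fun i => f (n-h) ≤ v i) by
        intro i hi
        simp only [Finset.mem_filter, Finset.mem_univ, true_and] at hi ⊢
        rw [hv1 i hi]; exact hq1)
      omega
  · rcases le_total ((1:ℝ)/2) (f 0) with hC | hD
    · -- value 1/2
      rw [min_eq_right hC, max_eq_right hB]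
      apply le_antisymm
      · apply projMed_le
        have e1 := card_range_ge (n+1) (n-h) (by omega)
        have c1 := Finset.card_le_card (show (Finset.range (n+1)).filter (fun j => n-h ≤ j)
            ⊆ (Finset.range (n+1)).filter (fun j => f j ≤ (1:ℝ)/2) by
          intro j hj
          simp only [Finset.mem_filter, Finset.mem_range] at hj ⊢
          exact ⟨hj.1, le_trans (ford (n-h) j hj.2 (by omega)) hB⟩)
        have e2 := card_fin_ge n h hh
        have c2 := Finset.card_le_card (show (Finset.univ.filter fun i : Fin n => ¬ (i:ℕ) < h)
            ⊆ Finset.univ.filter (fun i => v i ≤ (1:ℝ)/2) by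
          intro i hi
          simp only [Finset.mem_filter, Finset.mem_univ, true_and] at hi ⊢
          rw [hv2 i hi])
        omega
      · apply le_projMed
        have e1 := card_range_le' (n+1) 0 (by omega)
        have c1 := Finset.card_le_card (show (Finset.range (n+1)).filter (fun j => j ≤ 0)
            ⊆ (Finset.range (n+1)).filter (fun j => (1:ℝ)/2 ≤ f j) by
          intro j hj
          simp only [Finset.mem_filter, Finset.mem_range] at hj ⊢
          have : j = 0 := by omega
          subst this
          exact ⟨hj.1, hC⟩)
        have c2 : (Finset.univ.filter (fun i : Fin n => (1:ℝ)/2 ≤ v i)).card = n := by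
          apply voters_filter_all
          intro i
          by_cases hi : (i:ℕ) < h
          · rw [hv1 i hi]; norm_num
          · rw [hv2 i hi]
        omega
    · -- value f 0
      rw [min_eq_left hD, max_eq_right hq0f]
      apply le_antisymm
      · apply projMed_le
        have c1 : ((Finset.range (n+1)).filter (fun j => f j ≤ f 0)).card = n+1 := by
          rw [Finset.filter_true_of_mem]
          · simp
          · intro j hj
            have := Finset.mem_range.mp hj
            exact ford 0 j (by omega) (by omega)
        omega
      · apply le_projMed
        have e1 := card_range_le' (n+1) 0 (by omega)
        have c1 := Finset.card_le_card (show (Finset.range (n+1)).filter (fun j => j ≤ 0)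
            ⊆ (Finset.range (n+1)).filter (fun j => f 0 ≤ f j) by
          intro j hj
          simp only [Finset.mem_filter, Finset.mem_range] at hj ⊢
          have : j = 0 := by omega
          subst this
          exact ⟨hj.1, le_refl _⟩)
        have c2 : (Finset.univ.filter (fun i : Fin n => f 0 ≤ v i)).card = n := by
          apply voters_filter_all
          intro i
          by_cases hi : (i:ℕ) < h
          · rw [hv1 i hi]; exact h01
          · rw [hv2 i hi]; exact hD
        omega

lemma projMed_col2 (ford : ∀ k l, k ≤ l → l ≤ n → f l ≤ f k)
    (hmem : ∀ k ≤ n, f k ∈ Set.Icc (0:ℝ) 1)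
    (v : Fin n → ℝ) (h : ℕ) (hh : h ≤ n)
    (hv1 : ∀ i : Fin n, (i:ℕ) < h → v i = 0)
    (hv2 : ∀ i : Fin n, ¬ (i:ℕ) < h → v i = 1/2) :
    projMed n f v = min (f h) (max (f n) (1/2)) := by
  obtain ⟨hh0, hh1⟩ := hmem h (by omega)
  obtain ⟨hn0, hn1⟩ := hmem n (by omega)
  have hnh : f n ≤ f h := ford h n (by omega) (by omega)
  rcases le_total (f h) ((1:ℝ)/2) with hA | hB
  · -- value f h
    rw [min_eq_left (le_trans hA (le_max_right _ _))]
    apply le_antisymm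
    · apply projMed_le
      have e1 := card_range_ge (n+1) h (by omega)
      have c1 := Finset.card_le_card (show (Finset.range (n+1)).filter (fun j => h ≤ j)
          ⊆ (Finset.range (n+1)).filter (fun j => f j ≤ f h) by
        intro j hj
        simp only [Finset.mem_filter, Finset.mem_range] at hj ⊢
        exact ⟨hj.1, ford h j hj.2 (by omega)⟩)
      have e2 := card_fin_lt n h hh
      have c2 := Finset.card_le_card (show (Finset.univ.filter fun i : Fin n => (i:ℕ) < h)
          ⊆ Finset.univ.filter (fun i => v i ≤ f h) by
        intro i hi
        simp only [Finset.mem_filter, Finset.mem_univ, true_and] at hi ⊢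
        rw [hv1 i hi]; exact hh0)
      omega
    · apply le_projMed
      have e1 := card_range_le' (n+1) h (by omega)
      have c1 := Finset.card_le_card (show (Finset.range (n+1)).filter (fun j => j ≤ h)
          ⊆ (Finset.range (n+1)).filter (fun j => f h ≤ f j) by
        intro j hj
        simp only [Finset.mem_filter, Finset.mem_range] at hj ⊢
        exact ⟨hj.1, ford j h hj.2 (by omega)⟩)
      have e2 := card_fin_ge n h hh
      have c2 := Finset.card_le_card (show (Finset.univ.filter fun i : Fin n => ¬ (i:ℕ) < h)
          ⊆ Finset.univ.filter (fun i => f h ≤ v i) by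
        intro i hi
        simp only [Finset.mem_filter, Finset.mem_univ, true_and] at hi ⊢
        rw [hv2 i hi]; exact hA)
      omega
  · rcases le_total (f n) ((1:ℝ)/2) with hC | hD
    · -- value 1/2
      rw [max_eq_right hC, min_eq_right hB]
      apply le_antisymm
      · apply projMed_le
        have e1 := card_range_ge (n+1) n (by omega)
        have c1 := Finset.card_le_card (show (Finset.range (n+1)).filter (fun j => n ≤ j)
            ⊆ (Finset.range (n+1)).filter (fun j => f j ≤ (1:ℝ)/2) by
          intro j hj
          simp only [Finset.mem_filter, Finset.mem_range] at hj ⊢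
          have : j = n := by omega
          subst this
          exact ⟨hj.1, hC⟩)
        have c2 : (Finset.univ.filter (fun i : Fin n => v i ≤ (1:ℝ)/2)).card = n := by
          apply voters_filter_all
          intro i
          by_cases hi : (i:ℕ) < h
          · rw [hv1 i hi]; norm_num
          · rw [hv2 i hi]
        omega
      · apply le_projMed
        have e1 := card_range_le' (n+1) h (by omega)
        have c1 := Finset.card_le_card (show (Finset.range (n+1)).filter (fun j => j ≤ h)
            ⊆ (Finset.range (n+1)).filter (fun j => (1:ℝ)/2 ≤ f j) by
          intro j hj
          simp only [Finset.mem_filter, Finset.mem_range] at hj ⊢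
          exact ⟨hj.1, le_trans hB (ford j h hj.2 (by omega))⟩)
        have e2 := card_fin_ge n h hh
        have c2 := Finset.card_le_card (show (Finset.univ.filter fun i : Fin n => ¬ (i:ℕ) < h)
            ⊆ Finset.univ.filter (fun i => (1:ℝ)/2 ≤ v i) by
          intro i hi
          simp only [Finset.mem_filter, Finset.mem_univ, true_and] at hi ⊢
          rw [hv2 i hi])
        omega
    · -- value f n
      rw [max_eq_left hD, min_eq_right hnh]
      apply le_antisymm
      · apply projMed_le
        have e1 := card_range_ge (n+1) n (by omega)
        have c1 := Finset.card_le_card (show (Finset.range (n+1)).filter (fun j => n ≤ j)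
            ⊆ (Finset.range (n+1)).filter (fun j => f j ≤ f n) by
          intro j hj
          simp only [Finset.mem_filter, Finset.mem_range] at hj ⊢
          have : j = n := by omega
          subst this
          exact ⟨hj.1, le_refl _⟩)
        have c2 : (Finset.univ.filter (fun i : Fin n => v i ≤ f n)).card = n := by
          apply voters_filter_all
          intro i
          by_cases hi : (i:ℕ) < h
          · rw [hv1 i hi]; exact hn0
          · rw [hv2 i hi]; exact hD
        omega
      · apply le_projMed
        have c1 : ((Finset.range (n+1)).filter (fun j => f n ≤ f j)).card = n+1 := by
          rw [Finset.filter_true_of_mem]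
          · simp
          · intro j hj
            have := Finset.mem_range.mp hj
            exact ford j n (by omega) (by omega)
        omega

end medvals

lemma sum_split {m : ℕ} (hm : 2 ≤ m) (g : Fin m → ℝ) (A B C : ℝ)
    (h : ∀ j : Fin m, g j = if (j:ℕ) = 0 then A else if (j:ℕ) = 1 then B else C) :
    ∑ j, g j = A + B + ((m:ℝ) - 2) * C := by
  have h1 : ∑ j, g j = ∑ i ∈ Finset.range m, (if i = 0 then A else if i = 1 then B else C) := by
    rw [← Fin.sum_univ_eq_sum_range]
    exact Finset.sum_congr rfl (fun j _ => h j)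
  rw [h1, Finset.range_eq_Ico,
    ← Finset.sum_Ico_consecutive _ (by omega : 0 ≤ 2) (by omega : 2 ≤ m)]
  have h2 : ∑ i ∈ Finset.Ico 0 2, (if i = 0 then A else if i = 1 then B else C) = A + B := by
    rw [← Finset.range_eq_Ico]
    rw [Finset.sum_range_succ, Finset.sum_range_succ, Finset.sum_range_zero]
    norm_num
  have h3 : ∑ i ∈ Finset.Ico 2 m, (if i = 0 then A else if i = 1 then B else C)
      = ((m:ℝ) - 2) * C := by
    rw [Finset.sum_congr rfl (fun i hi => by
      have := Finset.mem_Ico.mp hi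
      rw [if_neg (by omega), if_neg (by omega)])]
    rw [Finset.sum_const, Nat.card_Ico, nsmul_eq_mul]
    have : ((m - 2 : ℕ) : ℝ) = (m:ℝ) - 2 := by
      push_cast [Nat.cast_sub hm]; ring
    rw [this]
  rw [h2, h3]

lemma sum_fin_ite (n h : ℕ) (hh : h ≤ n) (a b : ℝ) :
    ∑ i : Fin n, (if (i:ℕ) < h then a else b) = h * a + ((n:ℝ) - h) * b := by
  have h1 : ∑ i : Fin n, (if (i:ℕ) < h then a else b)
      = ∑ i ∈ Finset.range n, (if i < h then a else b) :=
    Fin.sum_univ_eq_sum_range (fun i => if i < h then a else b) n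
  rw [h1, Finset.range_eq_Ico, ← Finset.sum_Ico_consecutive _ (by omega : 0 ≤ h) hh]
  have h2 : ∑ i ∈ Finset.Ico 0 h, (if i < h then a else b) = h * a := by
    rw [Finset.sum_congr rfl (fun i hi => if_pos (Finset.mem_Ico.mp hi).2)]
    rw [Finset.sum_const, Nat.card_Ico, nsmul_eq_mul, Nat.sub_zero]
  have h3 : ∑ i ∈ Finset.Ico h n, (if i < h then a else b) = ((n:ℝ) - h) * b := by
    rw [Finset.sum_congr rfl (fun i hi => if_neg (by have := Finset.mem_Ico.mp hi; omega))]
    rw [Finset.sum_const, Nat.card_Ico, nsmul_eq_mul]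
    rw [show ((n - h : ℕ) : ℝ) = (n:ℝ) - h by push_cast [Nat.cast_sub hh]; ring]
  rw [h2, h3]

lemma master (F : ℕ → ℕ → ℝ → ℝ) (hF : ∀ n, 0 < n → IsPhantomSystem n (F n))
    (hZU : ZeroUnanimous F) (n m : ℕ) (hn : 1 ≤ n) (hm : 2 ≤ m) :
    ∃ P : Fin n → Fin m → ℝ, IsProfile P ∧ ∃ j : Fin m,
      (∃ t, IsNormPoint (F n) P t) ∧
      ∀ t, IsNormPoint (F n) P t →
        (Even n → (1 / 4 : ℝ) ≤ output (F n) P t j - mean P j) ∧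
        (Odd n → 1 / 4 * (1 - 1 / (n : ℝ)) ≤ output (F n) P t j - mean P j) := by
  have hn0 : 0 < n := hn
  have ps := hF n hn0
  set f := F n with hf
  set h := n / 2 with hh
  have hhn : h ≤ n := Nat.div_le_self n 2
  have hhq : h ≤ n - h := by omega
  have ford : ∀ t ∈ Set.Icc (0:ℝ) 1, ∀ k l, k ≤ l → l ≤ n → f l t ≤ f k t :=
    fun t ht k l hkl hln => ps.ordered k l hkl hln t ht
  have hmem : ∀ t ∈ Set.Icc (0:ℝ) 1, ∀ k ≤ n, f k t ∈ Set.Icc (0:ℝ) 1 :=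
    fun t ht k hk => ps.mem_Icc k hk t ht
  -- ===== auxiliary profile Q on 3 projects =====
  set Q : Fin n → Fin 3 → ℝ := fun i j =>
    if (i:ℕ) < n - h then (if (j:ℕ) = 0 then 1 else 0) else (if (j:ℕ) = 1 then 1 else 0)
    with hQdef
  have hQprof : IsProfile Q := by
    constructor
    · intro i j
      simp only [hQdef]
      split_ifs <;> norm_num
    · intro i
      rw [Fin.sum_univ_three]
      by_cases hi : (i:ℕ) < n - h <;> simp [hQdef, hi]
  have hQcols : ∀ t ∈ Set.Icc (0:ℝ) 1,
      projMed n (fun k => f k t) (fun i => Q i 0) = f h t ∧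
      projMed n (fun k => f k t) (fun i => Q i 1) = f (n - h) t ∧
      projMed n (fun k => f k t) (fun i => Q i 2) = f n t := by
    intro t ht
    refine ⟨?_, ?_, ?_⟩
    · have e := projMed_eq_phantom (f := fun k => f k t) (ford t ht) (hmem t ht)
        (fun i => Q i 0) (n - h) (by omega)
        (fun i => by by_cases hi : (i:ℕ) < n - h <;> simp [hQdef, hi])
        (by
          have heq : (Finset.univ.filter fun i : Fin n => Q i 0 = 1)
              = Finset.univ.filter fun i : Fin n => (i:ℕ) < n - h := by
            apply Finset.filter_congr
            intro i _
            by_cases hi : (i:ℕ) < n - h <;> simp [hQdef, hi]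
          rw [heq, card_fin_lt n (n - h) (by omega)])
      rw [e, show n - (n - h) = h from by omega]
    · have e := projMed_eq_phantom (f := fun k => f k t) (ford t ht) (hmem t ht)
        (fun i => Q i 1) h hhn
        (fun i => by by_cases hi : (i:ℕ) < n - h <;> simp [hQdef, hi])
        (by
          have heq : (Finset.univ.filter fun i : Fin n => Q i 1 = 1)
              = Finset.univ.filter fun i : Fin n => ¬ (i:ℕ) < n - h := by
            apply Finset.filter_congr
            intro i _
            by_cases hi : (i:ℕ) < n - h <;> simp [hQdef, hi]
          rw [heq, card_fin_ge n (n - h) (by omega)]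
          omega)
      rw [e]
    · have e := projMed_eq_phantom (f := fun k => f k t) (ford t ht) (hmem t ht)
        (fun i => Q i 2) 0 (by omega)
        (fun i => by by_cases hi : (i:ℕ) < n - h <;> simp [hQdef, hi])
        (by
          have heq : (Finset.univ.filter fun i : Fin n => Q i 2 = 1)
              = (∅ : Finset (Fin n)) := by
            apply Finset.filter_false_of_mem
            intro i _
            by_cases hi : (i:ℕ) < n - h <;> simp [hQdef, hi]
          rw [heq, Finset.card_empty])
      rw [e]
      norm_num
  have hQsum : ∀ t ∈ Set.Icc (0:ℝ) 1,
      (∑ j, projMed n (fun k => f k t) (fun i => Q i j)) = f h t + f (n-h) t + f n t := by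
    intro t ht
    obtain ⟨e0, e1, e2⟩ := hQcols t ht
    rw [Fin.sum_univ_three, e0, e1, e2]
  have contQ : ContinuousOn (fun t => f h t + f (n-h) t + f n t) (Set.Icc 0 1) :=
    ((ps.continuousOn h hhn).add (ps.continuousOn (n-h) (by omega))).add
      (ps.continuousOn n le_rfl)
  have hQ0 : f h 0 + f (n-h) 0 + f n 0 = 0 := by
    rw [ps.map_zero h hhn, ps.map_zero (n-h) (by omega), ps.map_zero n le_rfl]; ring
  have hQ1 : f h 1 + f (n-h) 1 + f n 1 = 3 := by
    rw [ps.map_one h hhn, ps.map_one (n-h) (by omega), ps.map_one n le_rfl]; norm_num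
  have hQmem : (1:ℝ) ∈ Set.Icc (f h 0 + f (n-h) 0 + f n 0) (f h 1 + f (n-h) 1 + f n 1) := by
    rw [hQ0, hQ1]; exact Set.mem_Icc.mpr (by norm_num)
  obtain ⟨s, hs, hgs⟩ := intermediate_value_Icc (by norm_num : (0:ℝ) ≤ 1) contQ hQmem
  have hQnorm : IsNormPoint f Q s := ⟨hs, by rw [hQsum s hs]; exact hgs⟩
  have hz : f n s = 0 := by
    have hout := hZU n 3 hn0 (by omega) Q hQprof 2
      (fun i => by by_cases hi : (i:ℕ) < n - h <;> simp [hQdef, hi]) s hQnorm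
    have : output f Q s 2 = projMed n (fun k => f k s) (fun i => Q i 2) := rfl
    rw [this, (hQcols s hs).2.2] at hout
    exact hout
  have hkey1 : (1:ℝ)/2 ≤ f h s := by
    have hord := ford s hs h (n-h) hhq (by omega)
    have : f h s + f (n-h) s + f n s = 1 := hgs
    linarith [hz]
  -- ===== main profile P on m projects =====
  set P : Fin n → Fin m → ℝ := fun i j =>
    if (i:ℕ) < h then (if (j:ℕ) = 0 then 1 else 0) else (if (j:ℕ) ≤ 1 then 1/2 else 0)
    with hPdef
  have hPprof : IsProfile P := by
    constructor
    · intro i j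
      simp only [hPdef]
      split_ifs <;> norm_num
    · intro i
      by_cases hi : (i:ℕ) < h
      · have e := sum_split hm (fun j : Fin m => P i j) 1 0 0 (fun j => by
          simp only [hPdef, if_pos hi]
          by_cases h0 : (j:ℕ) = 0
          · simp [h0]
          · by_cases h1 : (j:ℕ) = 1 <;> simp [h0, h1])
        rw [e]; ring
      · have e := sum_split hm (fun j : Fin m => P i j) (1/2) (1/2) 0 (fun j => by
          simp only [hPdef, if_neg hi]
          by_cases h0 : (j:ℕ) = 0
          · simp [h0]
          · by_cases h1 : (j:ℕ) = 1
            · simp [h0, h1]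
            · have h2 : ¬ (j:ℕ) ≤ 1 := by omega
              simp [h0, h1, h2])
        rw [e]; ring
  have hPcols : ∀ t ∈ Set.Icc (0:ℝ) 1, ∀ j : Fin m,
      projMed n (fun k => f k t) (fun i => P i j) =
        if (j:ℕ) = 0 then max (f (n-h) t) (min (f 0 t) (1/2))
        else if (j:ℕ) = 1 then min (f h t) (max (f n t) (1/2))
        else f n t := by
    intro t ht j
    by_cases h0 : (j:ℕ) = 0
    · rw [if_pos h0]
      exact projMed_col1 (ford t ht) (hmem t ht) (fun i => P i j) h hhn
        (fun i hi => by simp [hPdef, hi, h0])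
        (fun i hi => by simp [hPdef, hi, h0])
    · rw [if_neg h0]
      by_cases h1 : (j:ℕ) = 1
      · rw [if_pos h1]
        exact projMed_col2 (ford t ht) (hmem t ht) (fun i => P i j) h hhn
          (fun i hi => by simp [hPdef, hi, h0, h1])
          (fun i hi => by simp [hPdef, hi, h0, h1])
      · rw [if_neg h1]
        have e := projMed_eq_phantom (f := fun k => f k t) (ford t ht) (hmem t ht)
          (fun i => P i j) 0 (by omega)
          (fun i => by
            left
            have h2 : ¬ (j:ℕ) ≤ 1 := by omega
            by_cases hi : (i:ℕ) < h <;> simp [hPdef, hi, h0, h2])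
          (by
            have heq : (Finset.univ.filter fun i : Fin n => P i j = 1)
                = (∅ : Finset (Fin n)) := by
              apply Finset.filter_false_of_mem
              intro i _
              have h2 : ¬ (j:ℕ) ≤ 1 := by omega
              by_cases hi : (i:ℕ) < h <;> simp [hPdef, hi, h0, h2]
            rw [heq, Finset.card_empty])
        rw [e]
        norm_num
  have hPsum : ∀ t ∈ Set.Icc (0:ℝ) 1,
      (∑ j, projMed n (fun k => f k t) (fun i => P i j)) =
        max (f (n-h) t) (min (f 0 t) (1/2)) + min (f h t) (max (f n t) (1/2))
          + ((m:ℝ) - 2) * f n t := by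
    intro t ht
    exact sum_split hm _ _ _ _ (hPcols t ht)
  have contP : ContinuousOn (fun t => max (f (n-h) t) (min (f 0 t) (1/2))
      + min (f h t) (max (f n t) (1/2)) + ((m:ℝ) - 2) * f n t) (Set.Icc 0 1) := by
    have c0 := ps.continuousOn 0 (by omega)
    have ch := ps.continuousOn h hhn
    have cq := ps.continuousOn (n-h) (by omega)
    have cn := ps.continuousOn n le_rfl
    exact ((cq.sup (c0.inf continuousOn_const)).add
      (ch.inf (cn.sup continuousOn_const))).add (continuousOn_const.mul cn)
  have hP0 : max (f (n-h) 0) (min (f 0 0) (1/2)) + min (f h 0) (max (f n 0) (1/2))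
      + ((m:ℝ) - 2) * f n 0 = 0 := by
    rw [ps.map_zero h hhn, ps.map_zero (n-h) (by omega), ps.map_zero n le_rfl,
      ps.map_zero 0 (by omega)]
    norm_num
  have hP1 : max (f (n-h) 1) (min (f 0 1) (1/2)) + min (f h 1) (max (f n 1) (1/2))
      + ((m:ℝ) - 2) * f n 1 = m := by
    rw [ps.map_one h hhn, ps.map_one (n-h) (by omega), ps.map_one n le_rfl,
      ps.map_one 0 (by omega)]
    norm_num
  have hm2 : (2:ℝ) ≤ (m:ℝ) := by exact_mod_cast hm
  have hPmem : (1:ℝ) ∈ Set.Icc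
      (max (f (n-h) 0) (min (f 0 0) (1/2)) + min (f h 0) (max (f n 0) (1/2)) + ((m:ℝ) - 2) * f n 0)
      (max (f (n-h) 1) (min (f 0 1) (1/2)) + min (f h 1) (max (f n 1) (1/2)) + ((m:ℝ) - 2) * f n 1) := by
    rw [hP0, hP1]; exact Set.mem_Icc.mpr ⟨by norm_num, by linarith⟩
  obtain ⟨t0, ht0, hgt0⟩ := intermediate_value_Icc (by norm_num : (0:ℝ) ≤ 1) contP hPmem
  refine ⟨P, hPprof, ⟨1, by omega⟩, ⟨t0, ht0, by rw [hPsum t0 ht0]; exact hgt0⟩, ?_⟩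
  intro t hnt
  obtain ⟨ht, hsum⟩ := hnt
  have key : max (f (n-h) t) (min (f 0 t) (1/2)) + min (f h t) (max (f n t) (1/2))
      + ((m:ℝ) - 2) * f n t = 1 := by rw [← hPsum t ht]; exact hsum
  have hout : output f P t ⟨1, by omega⟩ = min (f h t) (max (f n t) (1/2)) := by
    have e := hPcols t ht ⟨1, by omega⟩
    rw [show ((⟨1, by omega⟩ : Fin m) : ℕ) = 1 from rfl] at e
    rw [if_neg (by norm_num), if_pos rfl] at e
    exact e
  have houtge : (1:ℝ)/2 ≤ output f P t ⟨1, by omega⟩ := by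
    rw [hout]
    rcases le_or_gt ((1:ℝ)/2) (f h t) with hA | hB
    · exact le_min hA (le_trans (by norm_num) (le_max_right (f n t) (1/2)))
    · have hts : t ≤ s := by
        by_contra hc
        push_neg at hc
        have := ps.monotoneOn h hhn hs ht hc.le
        linarith
      have hfnt : f n t = 0 := by
        have h1 := ps.monotoneOn n le_rfl ht hs hts
        rw [hz] at h1
        have h2 := (hmem t ht n le_rfl).1
        linarith
      have hM1 : max (f (n-h) t) (min (f 0 t) (1/2)) ≤ 1/2 :=
        max_le (le_trans (ford t ht h (n-h) hhq (by omega)) hB.le) (min_le_right _ _)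
      rw [hfnt, mul_zero, add_zero, show (0:ℝ) ⊔ 1/2 = 1/2 from by norm_num,
        min_eq_left hB.le] at key
      exfalso
      linarith
  have hmean : mean P ⟨1, by omega⟩ = ((n:ℝ) - h)/(2*n) := by
    rw [mean]
    have e : ∑ i, P i ⟨1, by omega⟩ = (h:ℝ) * 0 + ((n:ℝ) - h) * (1/2) := by
      rw [← sum_fin_ite n h hhn 0 (1/2)]
      apply Finset.sum_congr rfl
      intro i _
      by_cases hi : (i:ℕ) < h <;> simp [hPdef, hi]
    rw [e]
    ring
  constructor
  · intro hev
    obtain ⟨c, hc⟩ := hev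
    have hc1 : 1 ≤ c := by omega
    have hcast : (n:ℝ) = 2*(c:ℝ) := by
      have : n = 2*c := by omega
      rw [this]; push_cast; ring
    have hhc : (h:ℝ) = (c:ℝ) := by
      have : h = c := by omega
      rw [this]
    have hmean' : mean P (⟨1, by omega⟩ : Fin m) = 1/4 := by
      rw [hmean, hcast, hhc]
      have hc0 : (c:ℝ) ≠ 0 := by positivity
      field_simp
      ring
    rw [hmean']
    linarith
  · intro hodd
    obtain ⟨c, hc⟩ := hodd
    have hhc : (h:ℝ) = (c:ℝ) := by
      have : h = c := by omega
      rw [this]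
    have hcast : (n:ℝ) = 2*(c:ℝ) + 1 := by
      rw [hc]; push_cast; ring
    have hne : (n:ℝ) ≠ 0 := by positivity
    have hmean' : mean P (⟨1, by omega⟩ : Fin m) = ((c:ℝ)+1)/(2*(2*(c:ℝ)+1)) := by
      rw [hmean, hcast, hhc]
      ring_nf
    have heq : (1:ℝ)/4 * (1 - 1/(n:ℝ)) = 1/2 - ((c:ℝ)+1)/(2*(2*(c:ℝ)+1)) := by
      rw [hcast]
      have : (2*(c:ℝ)+1) ≠ 0 := by positivity
      field_simp
      ring
    rw [hmean', heq]
    linarith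


/-- Lower bound on overfunding for zero-unanimous moving phantom
mechanisms, and the resulting impossibility. -/
theorem zero_unanimous_overfund_lower_bound
    (F : ℕ → ℕ → ℝ → ℝ) (hF : ∀ n, 0 < n → IsPhantomSystem n (F n))
    (hZU : ZeroUnanimous F) :
    (∀ n m : ℕ, 1 ≤ n → 2 ≤ m →
      ∃ P : Fin n → Fin m → ℝ, IsProfile P ∧ ∃ j : Fin m,
        ∀ t, IsNormPoint (F n) P t →
          (Even n → (1 / 4 : ℝ) ≤ output (F n) P t j - mean P j) ∧
          (Odd n → 1 / 4 * (1 - 1 / (n : ℝ)) ≤ output (F n) P t j - mean P j)) ∧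
    ¬ ∃ α : ℕ → ℕ → ℝ, OverfundsByAtMost F α ∧
        ∃ n m : ℕ, 1 ≤ n ∧ 2 ≤ m ∧
          ((Even n ∧ α n m < 1 / 4) ∨
           (Odd n ∧ α n m < 1 / 4 * (1 - 1 / (n : ℝ)))) := by
  constructor
  · intro n m hn hm
    obtain ⟨P, hP, j, _, hbound⟩ := master F hF hZU n m hn hm
    exact ⟨P, hP, j, hbound⟩
  · rintro ⟨α, hOF, n, m, hn, hm, hcase⟩
    obtain ⟨P, hP, j, ⟨t0, ht0⟩, hbound⟩ := master F hF hZU n m hn hm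
    have hof := hOF n m hn (by omega) P hP t0 ht0 j
    obtain ⟨hb1, hb2⟩ := hbound t0 ht0
    rcases hcase with ⟨hev, hlt⟩ | ⟨hodd, hlt⟩
    · linarith [hb1 hev]
    · linarith [hb2 hodd]
end
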